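/- For a unilateral weighted shift W_λ in ℓ²(ℕ), the square W_λ² is a closed operator if and only if there exists c > 0 such that |λ_k|² ≤ c(1 + |λ_k λ_{k+1}|²) for all k ∈ ℕ. -/

import Mathlib

open InnerProductSpace in
/-- A conjugation on a complex inner product space: an antilinear involution
satisfying `⟪Cf, Cg⟫ = ⟪g, f⟫`. -/
structure Conjugation (H : Type*) [NormedAddCommGroup H] [InnerProductSpace ℂ H] where
  toFun : H → H
  map_add' : ∀ x y, toFun (x + y) = toFun x + toFun y
  map_smul' : ∀ (c : ℂ) (x : H), toFun (c • x) = (starRingEnd ℂ c) • toFun x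
  invol : ∀ x, toFun (toFun x) = x
  inner_map : ∀ x y, (inner ℂ (toFun x) (toFun y) : ℂ) = inner ℂ y x

/-- `T` is `C`-symmetric: `T ⊆ C T* C`. -/
noncomputable def CSymmetric {H : Type*} [NormedAddCommGroup H] [InnerProductSpace ℂ H]
    [CompleteSpace H] (C : Conjugation H) (T : H →ₗ.[ℂ] H) : Prop :=
  ∀ x : T.domain, ∃ hx : C.toFun x ∈ T.adjoint.domain,
    C.toFun (T.adjoint ⟨C.toFun x, hx⟩) = T x

/-- `T` is `C`-selfadjoint: `T = C T* C`. -/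
noncomputable def CSelfAdjoint {H : Type*} [NormedAddCommGroup H] [InnerProductSpace ℂ H]
    [CompleteSpace H] (C : Conjugation H) (T : H →ₗ.[ℂ] H) : Prop :=
  CSymmetric C T ∧ ∀ y : H, C.toFun y ∈ T.adjoint.domain → y ∈ T.domain

/-- Composition of partially defined linear maps, with its natural (maximal) domain. -/
noncomputable def LinearPMap.pcomp {R E F G : Type*} [Ring R] [AddCommGroup E] [Module R E]
    [AddCommGroup F] [Module R F] [AddCommGroup G] [Module R G]
    (g : F →ₗ.[R] G) (f : E →ₗ.[R] F) : E →ₗ.[R] G :=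
  g.comp (f.domRestrict ((g.domain.comap f.toFun).map f.domain.subtype))
    (by
      rintro ⟨x, hx1, hx2⟩
      obtain ⟨y, hy, hyx⟩ := hx1
      subst hyx
      exact hy)

/-- Natural powers of a partially defined linear map, `T^(n+1) = T ∘ T^n`, with
`T^0` the identity on the whole space. -/
noncomputable def LinearPMap.ppow {R E : Type*} [Ring R] [AddCommGroup E] [Module R E]
    (T : E →ₗ.[R] E) : ℕ → E →ₗ.[R] E
  | 0 => ⟨⊤, (⊤ : Submodule R E).subtype⟩
  | n + 1 => T.pcomp (T.ppow n)

/-- `W` is the unilateral weighted shift in `ℓ²(ℕ)` with weights `lam` (0-indexed: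
`W eₙ = lam n • e_{n+1}`): it has the maximal domain
`{f : Σ |lam n * f n|² < ∞}` and acts by `(W f)(n+1) = lam n * f n`, `(W f)(0) = 0`. -/
def IsWeightedShift (lam : ℕ → ℂ) (W : lp (fun _ : ℕ => ℂ) 2 →ₗ.[ℂ] lp (fun _ : ℕ => ℂ) 2) :
    Prop :=
  (∀ f : lp (fun _ : ℕ => ℂ) 2, f ∈ W.domain ↔ Memℓp (fun n => lam n * f n) 2) ∧
  (∀ f : W.domain, (W f : lp (fun _ : ℕ => ℂ) 2) 0 = 0 ∧
    ∀ n : ℕ, (W f : lp (fun _ : ℕ => ℂ) 2) (n + 1) = lam n * (f : lp (fun _ : ℕ => ℂ) 2) n)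

/-- The canonical orthonormal basis of `ℓ²(ℕ)` (0-indexed). -/
noncomputable def e (n : ℕ) : lp (fun _ : ℕ => ℂ) 2 := lp.single 2 n 1

/-! The graph of `W²` always has closure `{(f, g) : g = (0, 0, λ₀λ₁f₀, λ₁λ₂f₁, …)}`: coordinate
evaluations are continuous on `ℓ²`, and the truncations of `f` lie in the domain of `W²`. So `W²` is
closed iff `f ∈ ℓ²` and `(λₖλₖ₊₁fₖ) ∈ ℓ²` force `(λₖfₖ) ∈ ℓ²`. The bound gives this after summing it
against `|fₖ|²`; when the bound fails, a vector supported on a sparse set of indices where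
`|λₖ|² / (1 + |λₖλₖ₊₁|²)` is large violates it. -/

open Filter Topology Function
open scoped ENNReal lp

section Sequences

variable {ι κ E : Type*} [NormedAddCommGroup E]

lemma memℓp_two_iff_summable {f : ι → E} : Memℓp f 2 ↔ Summable fun i => ‖f i‖ ^ 2 := by
  rw [memℓp_gen_iff (by norm_num)]
  norm_num

lemma memℓp_extend_zero_iff {φ : ι → κ} (hφ : Injective φ) {u : ι → E} {p : ℝ≥0∞}
    (hp : 0 < p.toReal) : Memℓp (extend φ u 0) p ↔ Memℓp u p := by
  rw [memℓp_gen_iff hp, memℓp_gen_iff hp, ← hφ.summable_iff]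
  · simp only [comp_def, hφ.extend_apply]
  · intro k hk
    rw [extend_apply' _ _ _ hk]
    simp [Real.zero_rpow hp.ne']

lemma memℓp_indicator_Iio (f : ℕ → E) (N : ℕ) (p : ℝ≥0∞) : Memℓp ((Set.Iio N).indicator f) p :=
  (memℓp_zero ((Set.finite_Iio N).subset fun _ => Set.mem_of_indicator_ne_zero)).of_exponent_ge
    (by simp)

variable {𝕜 : Type*} [NormedField 𝕜]

lemma mul_extend_zero {φ : ι → κ} (hφ : Injective φ) (b : κ → 𝕜) (u : ι → 𝕜) :
    b * extend φ u 0 = extend φ ((b ∘ φ) * u) 0 := by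
  funext k
  by_cases hk : ∃ i, φ i = k
  · obtain ⟨i, rfl⟩ := hk
    simp [hφ.extend_apply]
  · simp [extend_apply' _ _ _ hk]

lemma Memℓp.mul_of_norm_sq_le {a b f : ι → 𝕜} {c : ℝ}
    (hab : ∀ i, ‖a i‖ ^ 2 ≤ c * (1 + ‖b i‖ ^ 2)) (hf : Memℓp f 2) (hbf : Memℓp (b * f) 2) :
    Memℓp (a * f) 2 := by
  rw [memℓp_two_iff_summable] at *
  refine .of_nonneg_of_le (fun i => by positivity) (fun i => ?_) ((hf.add hbf).mul_left c)
  calc ‖(a * f) i‖ ^ 2 = ‖a i‖ ^ 2 * ‖f i‖ ^ 2 := by rw [Pi.mul_apply, norm_mul, mul_pow]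
    _ ≤ c * (1 + ‖b i‖ ^ 2) * ‖f i‖ ^ 2 := by gcongr; exact hab i
    _ = c * (‖f i‖ ^ 2 + ‖(b * f) i‖ ^ 2) := by rw [Pi.mul_apply, norm_mul]; ring

lemma exists_strictMono_lt_of_not_exists_le_mul {v w : ℕ → ℝ} (hw : ∀ k, 0 < w k)
    (h : ¬∃ c : ℝ, 0 < c ∧ ∀ k, v k ≤ c * w k) (C : ℕ → ℝ) :
    ∃ φ : ℕ → ℕ, StrictMono φ ∧ ∀ n, C n * w (φ n) < v (φ n) := by
  refine extraction_forall_of_frequently (P := fun n k => C n * w k < v k) fun n => ?_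
  by_contra hfreq
  obtain ⟨B, hB⟩ : BddAbove (Set.range fun k => v k / w k) := by
    refine IsBoundedUnder.bddAbove_range (isBoundedUnder_of_eventually_le (a := C n) ?_)
    filter_upwards [not_frequently.1 hfreq] with k hk
    rw [div_le_iff₀ (hw k)]
    exact not_lt.1 hk
  refine h ⟨max B 1, by positivity, fun k => ?_⟩
  have hk : v k / w k ≤ B := hB ⟨k, rfl⟩
  rw [div_le_iff₀ (hw k)] at hk
  exact hk.trans (by gcongr; exacts [(hw k).le, le_max_left B 1])

/-- The witness is `f = ∑ⱼ (a kⱼ)⁻¹ e_{kⱼ}` along indices with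
`2 ^ j * (1 + ‖b kⱼ‖ ^ 2) < ‖a kⱼ‖ ^ 2`: then `‖f kⱼ‖²` and `‖b kⱼ f kⱼ‖²` are at most `2⁻ʲ`,
while `a kⱼ f kⱼ = 1`. -/
lemma exists_memℓp_not_memℓp_mul {a b : ℕ → 𝕜}
    (h : ¬∃ c : ℝ, 0 < c ∧ ∀ k, ‖a k‖ ^ 2 ≤ c * (1 + ‖b k‖ ^ 2)) :
    ∃ f : ℕ → 𝕜, Memℓp f 2 ∧ Memℓp (b * f) 2 ∧ ¬Memℓp (a * f) 2 := by
  obtain ⟨φ, hφ, hlt⟩ := exists_strictMono_lt_of_not_exists_le_mul (fun k => by positivity) h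
    (fun n => 2 ^ n)
  have h2pow : ∀ n, (0 : ℝ) < 2 ^ n := fun n => by positivity
  have ha : ∀ n, (2 : ℝ) ^ n ≤ ‖a (φ n)‖ ^ 2 := fun n => by
    nlinarith [hlt n, h2pow n, sq_nonneg ‖b (φ n)‖]
  have ha_pos : ∀ n, 0 < ‖a (φ n)‖ ^ 2 := fun n => (h2pow n).trans_le (ha n)
  have memℓp_of_geometric : ∀ {u : ℕ → 𝕜}, (∀ n, 2 ^ n * ‖u n‖ ^ 2 ≤ 1) → Memℓp u 2 := fun hu => by
    refine memℓp_two_iff_summable.2 (summable_geometric_two.of_nonneg_of_le (fun n => by positivity)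
      fun n => ?_)
    rw [div_pow, one_pow, le_div_iff₀ (h2pow n), mul_comm]
    exact hu n
  set u : ℕ → 𝕜 := fun n => (a (φ n))⁻¹
  refine ⟨extend φ u 0, ?_, ?_, ?_⟩
  · refine (memℓp_extend_zero_iff hφ.injective (by norm_num)).2 (memℓp_of_geometric fun n => ?_)
    rw [norm_inv, inv_pow, ← div_eq_mul_inv, div_le_one (ha_pos n)]
    exact ha n
  · rw [mul_extend_zero hφ.injective]
    refine (memℓp_extend_zero_iff hφ.injective (by norm_num)).2 (memℓp_of_geometric fun n => ?_)
    simp only [u, Pi.mul_apply, comp_apply, norm_mul, norm_inv, mul_pow, inv_pow]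
    rw [← mul_assoc, ← div_eq_mul_inv, div_le_one (ha_pos n)]
    nlinarith [hlt n, h2pow n]
  · have hone : (a ∘ φ) * u = 1 :=
      funext fun n => mul_inv_cancel₀ (show a (φ n) ≠ 0 from fun h0 => by simpa [h0] using ha_pos n)
    rw [mul_extend_zero hφ.injective, memℓp_extend_zero_iff hφ.injective (by norm_num), hone,
      memℓp_two_iff_summable]
    intro hs
    simp only [Pi.one_apply, norm_one, one_pow] at hs
    have := Finite.of_summable_const one_pos hs
    exact not_finite ℕ

theorem forall_memℓp_mul_imp_memℓp_mul_iff {a b : ℕ → 𝕜} :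
    (∀ f : ℕ → 𝕜, Memℓp f 2 → Memℓp (b * f) 2 → Memℓp (a * f) 2) ↔
      ∃ c : ℝ, 0 < c ∧ ∀ k, ‖a k‖ ^ 2 ≤ c * (1 + ‖b k‖ ^ 2) := by
  refine ⟨fun h => ?_, fun ⟨c, _, hc⟩ f hf hbf => hf.mul_of_norm_sq_le hc hbf⟩
  by_contra hc
  obtain ⟨f, hf, hbf, haf⟩ := exists_memℓp_not_memℓp_mul hc
  exact haf (h f hf hbf)

end Sequences

section WeightedShiftSequence

variable {𝕜 : Type*} [NormedField 𝕜]

def weightedShift (lam f : ℕ → 𝕜) : ℕ → 𝕜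
  | 0 => 0
  | n + 1 => lam n * f n

@[simp] lemma weightedShift_zero (lam f : ℕ → 𝕜) : weightedShift lam f 0 = 0 := rfl

@[simp] lemma weightedShift_succ (lam f : ℕ → 𝕜) (n : ℕ) :
    weightedShift lam f (n + 1) = lam n * f n := rfl

lemma memℓp_weightedShift_iff {lam f : ℕ → 𝕜} {p : ℝ≥0∞} (hp : 0 < p.toReal) :
    Memℓp (weightedShift lam f) p ↔ Memℓp (lam * f) p := by
  rw [memℓp_gen_iff hp, memℓp_gen_iff hp, ← summable_nat_add_iff 1]
  rfl

lemma mul_weightedShift (lam mu f : ℕ → 𝕜) :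
    lam * weightedShift mu f = weightedShift (fun n => mu n * lam (n + 1)) f := by
  funext n
  cases n with
  | zero => simp
  | succ n => simp only [Pi.mul_apply, weightedShift_succ]; ring

lemma memℓp_weightedShift_weightedShift_iff {lam f : ℕ → 𝕜} :
    Memℓp (weightedShift lam (weightedShift lam f)) 2 ↔
      Memℓp ((fun k => lam k * lam (k + 1)) * f) 2 := by
  rw [memℓp_weightedShift_iff (by norm_num), mul_weightedShift,
    memℓp_weightedShift_iff (by norm_num)]

lemma weightedShift_indicator_Iio (lam f : ℕ → 𝕜) (N : ℕ) :
    weightedShift lam ((Set.Iio N).indicator f) =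
      (Set.Iio (N + 1)).indicator (weightedShift lam f) := by
  funext n
  cases n with
  | zero => simp
  | succ n => by_cases hn : n < N <;> simp [Set.indicator, hn]

lemma continuous_weightedShift (lam : ℕ → 𝕜) : Continuous (weightedShift lam) := by
  refine continuous_pi fun n => ?_
  cases n with
  | zero => exact continuous_const
  | succ n => exact continuous_const.mul (continuous_apply n)

end WeightedShiftSequence

lemma lp.coe_sum_range_single {E : Type*} [NormedAddCommGroup E] {p : ℝ≥0∞}
    (f : lp (fun _ : ℕ => E) p) (N : ℕ) :
    ⇑(∑ i ∈ Finset.range N, lp.single p i (f i)) = (Set.Iio N).indicator f := by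
  funext n
  simp only [lp.coeFn_sum, Finset.sum_apply, lp.coeFn_single, Finset.sum_pi_single]
  simp [Set.indicator]

def weightedShiftSqGraph (lam : ℕ → ℂ) : Set (ℓ²(ℕ, ℂ) × ℓ²(ℕ, ℂ)) :=
  {p | ⇑p.2 = weightedShift lam (weightedShift lam p.1)}

lemma isClosed_weightedShiftSqGraph (lam : ℕ → ℂ) : IsClosed (weightedShiftSqGraph lam) := by
  have hcoe := (lp.uniformContinuous_coe (E := fun _ : ℕ => ℂ) (p := 2)).continuous
  exact isClosed_eq (hcoe.comp continuous_snd)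
    ((continuous_weightedShift lam).comp ((continuous_weightedShift lam).comp
      (hcoe.comp continuous_fst)))

namespace LinearPMap

variable {R E F G : Type*} [Ring R] [AddCommGroup E] [Module R E] [AddCommGroup F] [Module R F]
  [AddCommGroup G] [Module R G] (g : F →ₗ.[R] G) (f : E →ₗ.[R] F)

lemma mem_pcomp_domain_iff {x : E} :
    x ∈ (g.pcomp f).domain ↔ ∃ hx : x ∈ f.domain, f ⟨x, hx⟩ ∈ g.domain := by
  refine ⟨fun ⟨⟨y, hy, hyx⟩, hx⟩ => ⟨hx, ?_⟩, fun ⟨hx, hfx⟩ => ⟨⟨⟨x, hx⟩, hfx, rfl⟩, hx⟩⟩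
  obtain rfl : y = ⟨x, hx⟩ := Subtype.ext hyx
  exact hy

lemma pcomp_apply (x : (g.pcomp f).domain) :
    g.pcomp f x = g ⟨f ⟨x, ((mem_pcomp_domain_iff g f).1 x.2).1⟩,
      ((mem_pcomp_domain_iff g f).1 x.2).2⟩ :=
  rfl

end LinearPMap

namespace IsWeightedShift

variable {lam : ℕ → ℂ} {W : ℓ²(ℕ, ℂ) →ₗ.[ℂ] ℓ²(ℕ, ℂ)} (hW : IsWeightedShift lam W)
include hW

lemma mem_domain_iff (f : ℓ²(ℕ, ℂ)) : f ∈ W.domain ↔ Memℓp (weightedShift lam f) 2 :=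
  (hW.1 f).trans (memℓp_weightedShift_iff (by norm_num)).symm

lemma coe_apply (x : W.domain) : ⇑(W x) = weightedShift lam x := by
  funext n
  cases n with
  | zero => exact (hW.2 x).1
  | succ n => exact (hW.2 x).2 n

lemma mem_sq_domain_iff (f : ℓ²(ℕ, ℂ)) :
    f ∈ (W.pcomp W).domain ↔
      Memℓp (weightedShift lam f) 2 ∧ Memℓp (weightedShift lam (weightedShift lam f)) 2 := by
  rw [LinearPMap.mem_pcomp_domain_iff]
  refine ⟨fun ⟨hf, hWf⟩ => ⟨(hW.mem_domain_iff f).1 hf, ?_⟩, fun ⟨h₁, h₂⟩ => ?_⟩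
  · rw [← hW.coe_apply ⟨f, hf⟩]
    exact (hW.mem_domain_iff _).1 hWf
  · refine ⟨(hW.mem_domain_iff f).2 h₁, (hW.mem_domain_iff _).2 ?_⟩
    rwa [hW.coe_apply]

lemma coe_sq_apply (x : (W.pcomp W).domain) :
    ⇑(W.pcomp W x) = weightedShift lam (weightedShift lam x) := by
  rw [LinearPMap.pcomp_apply, hW.coe_apply, hW.coe_apply]

lemma graph_sq_subset :
    ((W.pcomp W).graph : Set (ℓ²(ℕ, ℂ) × ℓ²(ℕ, ℂ))) ⊆ weightedShiftSqGraph lam := by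
  intro p hp
  obtain ⟨x, hx₁, hx₂⟩ := (LinearPMap.mem_graph_iff _).1 hp
  rw [weightedShiftSqGraph, Set.mem_ofPred_eq, ← hx₁, ← hx₂, hW.coe_sq_apply]

lemma weightedShiftSqGraph_subset_closure_graph_sq :
    weightedShiftSqGraph lam ⊆ closure (W.pcomp W).graph := by
  rintro ⟨f, g⟩ (hfg : ⇑g = _)
  set x : ℕ → ℓ²(ℕ, ℂ) := fun N => ∑ i ∈ Finset.range N, lp.single 2 i (f i)
  set y : ℕ → ℓ²(ℕ, ℂ) := fun N => ∑ i ∈ Finset.range (N + 2), lp.single 2 i (g i)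
  have hx : Tendsto x atTop (𝓝 f) := (lp.hasSum_single (by norm_num) f).tendsto_sum_nat
  have hy : Tendsto y atTop (𝓝 g) :=
    (lp.hasSum_single (by norm_num) g).tendsto_sum_nat.comp (tendsto_add_atTop_nat 2)
  have hdom : ∀ N, x N ∈ (W.pcomp W).domain := fun N => by
    rw [hW.mem_sq_domain_iff, lp.coe_sum_range_single, weightedShift_indicator_Iio,
      weightedShift_indicator_Iio]
    exact ⟨memℓp_indicator_Iio _ _ _, memℓp_indicator_Iio _ _ _⟩
  have happly : ∀ N, weightedShift lam (weightedShift lam (x N)) = y N := fun N => by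
    rw [lp.coe_sum_range_single, lp.coe_sum_range_single, weightedShift_indicator_Iio,
      weightedShift_indicator_Iio, hfg]
  refine mem_closure_of_tendsto (hx.prodMk_nhds hy) (Eventually.of_forall fun N => ?_)
  exact (LinearPMap.mem_graph_iff _).2
    ⟨⟨x N, hdom N⟩, rfl, lp.ext ((hW.coe_sq_apply _).trans (happly N))⟩

lemma closure_graph_sq :
    closure ((W.pcomp W).graph : Set (ℓ²(ℕ, ℂ) × ℓ²(ℕ, ℂ))) = weightedShiftSqGraph lam :=
  (closure_minimal hW.graph_sq_subset (isClosed_weightedShiftSqGraph lam)).antisymm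
    hW.weightedShiftSqGraph_subset_closure_graph_sq

lemma isClosed_sq_iff :
    (W.pcomp W).IsClosed ↔ ∀ f : ℕ → ℂ, Memℓp f 2 →
      Memℓp ((fun k => lam k * lam (k + 1)) * f) 2 → Memℓp (lam * f) 2 := by
  rw [LinearPMap.IsClosed, ← closure_subset_iff_isClosed, hW.closure_graph_sq]
  constructor
  · intro h f hf hbf
    let g : ℓ²(ℕ, ℂ) := ⟨_, memℓp_weightedShift_weightedShift_iff.2 hbf⟩
    obtain ⟨x, hx, -⟩ := (LinearPMap.mem_graph_iff _).1 (h (show (⟨f, hf⟩, g) ∈ _ from rfl))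
    have hdom := ((hW.mem_sq_domain_iff _).1 x.2).1
    rwa [hx, memℓp_weightedShift_iff (by norm_num)] at hdom
  · rintro h ⟨f, g⟩ (hfg : ⇑g = _)
    have hgf : Memℓp (weightedShift lam (weightedShift lam f)) 2 := hfg ▸ g.2
    have hf : Memℓp (weightedShift lam f) 2 := (memℓp_weightedShift_iff (by norm_num)).2
      (h f f.2 (memℓp_weightedShift_weightedShift_iff.1 hgf))
    exact (LinearPMap.mem_graph_iff _).2 ⟨⟨f, (hW.mem_sq_domain_iff f).2 ⟨hf, hgf⟩⟩, rfl,
      lp.ext ((hW.coe_sq_apply _).trans hfg.symm)⟩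

end IsWeightedShift

/-- for a unilateral weighted shift `W_λ` in `ℓ²(ℕ)`, the square `W_λ²`
is closed iff there is `c > 0` with `|λ_k|² ≤ c (1 + |λ_k λ_{k+1}|²)` for all `k`. -/
theorem stmt_10 (lam : ℕ → ℂ)
    (W : lp (fun _ : ℕ => ℂ) 2 →ₗ.[ℂ] lp (fun _ : ℕ => ℂ) 2)
    (hW : IsWeightedShift lam W) :
    (W.pcomp W).IsClosed ↔
      ∃ c : ℝ, 0 < c ∧ ∀ k : ℕ, ‖lam k‖ ^ 2 ≤ c * (1 + ‖lam k * lam (k + 1)‖ ^ 2) :=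
  hW.isClosed_sq_iff.trans forall_memℓp_mul_imp_memℓp_mul_iff
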